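/- Let Q ∈ F_q[x] be monic irreducible and 𝔇 = deg Q − 1. Then (1/φ(Q)) · Σ_{χ ≠ χ₀ mod Q} |L(1/2,χ)|² = 𝔇 + O(1), with an implied constant depending only on q. -/

import Mathlib

/-!
Dirichlet characters modulo an irreducible `Q` are the multiplicative characters of the finite
field `F[X]/(Q)`. Expanding `|L(1/2,χ)|²` and summing over all of them, orthogonality keeps only
the diagonal terms, because distinct monic polynomials of degree `< deg Q` stay distinct
modulo `Q`; so the full second moment is exactly `φ(Q) Σ_{deg N < deg Q} q^{-deg N} = φ(Q) deg Q`.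
Removing the trivial character costs
`|L(1/2,χ₀)|² ≤ (Σ_{n < deg Q} q^{n/2})² ≤ q^{deg Q}/(√q - 1)²`, which is `O(φ(Q))` since
`φ(Q) = q^{deg Q} - 1`.
-/

open Polynomial

noncomputable section

variable {F : Type*}

/-- A Dirichlet character modulo `Q` over the polynomial ring. -/
def IsDirichletChar [CommRing F] (Q : Polynomial F) (χ : Polynomial F → ℂ) : Prop :=
  (∀ A B : Polynomial F, χ (A + B * Q) = χ A) ∧
  (∀ A B : Polynomial F, χ (A * B) = χ A * χ B) ∧
  (∀ A : Polynomial F, χ A ≠ 0 ↔ IsCoprime A Q)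

/-- The trivial character modulo `Q`. -/
def trivialChar [CommRing F] (Q : Polynomial F) : Polynomial F → ℂ :=
  fun A => @ite ℂ (IsCoprime A Q) (Classical.propDecidable _) 1 0

/-- Euler's totient: the number of residue classes modulo `Q` coprime to `Q`. -/
def polyPhi [Field F] (Q : Polynomial F) : ℕ :=
  Nat.card ((Polynomial F ⧸ Ideal.span {Q}))ˣ

/-- The central value `L(1/2,χ)` as a finite sum over monic polynomials of degree `≤ 𝔇`. -/
def Lhalf [Field F] (q 𝔇 : ℕ) (χ : Polynomial F → ℂ) : ℂ :=
  ∑ᶠ N ∈ {N : Polynomial F | N.Monic ∧ N.natDegree ≤ 𝔇},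
    χ N / (Real.sqrt ((q : ℝ) ^ N.natDegree) : ℂ)

namespace MulChar

variable {R : Type*} [CommRing R] [Finite R]

instance : Fintype (MulChar R ℂ) := .ofFinite _

theorem sum_apply_eq_ite [DecidableEq R] (a : R) :
    ∑ χ : MulChar R ℂ, χ a = if a = 1 then (Nat.card Rˣ : ℂ) else 0 := by
  have : NeZero (Monoid.exponent Rˣ : ℂ) :=
    ⟨Nat.cast_ne_zero.mpr Monoid.exponent_ne_zero_of_finite⟩
  split_ifs with ha
  · simp [ha, ← Nat.card_eq_fintype_card, card_eq_card_units_of_hasEnoughRootsOfUnity]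
  · obtain ⟨χ, hχ⟩ := exists_apply_ne_one_of_hasEnoughRootsOfUnity R ℂ ha
    refine eq_zero_of_mul_eq_self_left hχ ?_
    simp only [Finset.mul_sum, ← mul_apply]
    exact Fintype.sum_bijective _ (Group.mulLeft_bijective χ) _ _ fun _ ↦ rfl

theorem sum_apply_mul_inv_apply [DecidableEq R] (a : R) (u : Rˣ) :
    ∑ χ : MulChar R ℂ, χ a * χ⁻¹ u = if a = u then (Nat.card Rˣ : ℂ) else 0 := by
  simp only [inv_apply, Ring.inverse_unit, ← map_mul, sum_apply_eq_ite, Units.mul_inv_eq_one]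

theorem sum_norm_sq_sum_mul_apply {ι : Type*} (s : Finset ι) (c : ι → ℂ) {f : ι → R}
    (hf : ∀ i ∈ s, IsUnit (f i)) (hinj : Set.InjOn f s) :
    ∑ χ : MulChar R ℂ, ‖∑ i ∈ s, c i * χ (f i)‖ ^ 2 = Nat.card Rˣ * ∑ i ∈ s, ‖c i‖ ^ 2 := by
  classical
  apply Complex.ofReal_injective
  push_cast
  simp_rw [← Complex.mul_conj', map_sum, map_mul, Finset.sum_mul_sum, Finset.mul_sum]
  calc ∑ χ : MulChar R ℂ, ∑ i ∈ s, ∑ j ∈ s,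
          c i * χ (f i) * ((starRingEnd ℂ) (c j) * (starRingEnd ℂ) (χ (f j)))
      = ∑ i ∈ s, ∑ j ∈ s,
          c i * (starRingEnd ℂ) (c j) * ∑ χ : MulChar R ℂ, χ (f i) * χ⁻¹ (f j) := by
        rw [Finset.sum_comm]
        refine Finset.sum_congr rfl fun i _ ↦ ?_
        rw [Finset.sum_comm]
        refine Finset.sum_congr rfl fun j _ ↦ ?_
        rw [Finset.mul_sum]
        refine Finset.sum_congr rfl fun χ _ ↦ ?_
        rw [← RCLike.star_def, star_apply']
        ring
    _ = ∑ i ∈ s, Nat.card Rˣ * (c i * (starRingEnd ℂ) (c i)) := by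
        refine Finset.sum_congr rfl fun i hi ↦ ?_
        rw [Finset.sum_eq_single_of_mem i hi fun j hj hji ↦ ?_]
        · obtain ⟨u, hu⟩ := hf i hi
          rw [← hu, sum_apply_mul_inv_apply, if_pos rfl]
          ring
        · obtain ⟨u, hu⟩ := hf j hj
          rw [← hu, sum_apply_mul_inv_apply, if_neg, mul_zero]
          exact fun h ↦ hji (hinj hi hj (h.trans hu)).symm

end MulChar

namespace AdjoinRoot

variable {R : Type*} [CommRing R] {Q : R[X]}

theorem isUnit_mk_iff_isCoprime {A : R[X]} : IsUnit (mk Q A) ↔ IsCoprime A Q := by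
  constructor
  · rintro ⟨u, hu⟩
    obtain ⟨B, hB⟩ := mk_surjective (↑u⁻¹ : AdjoinRoot Q)
    obtain ⟨C, hC⟩ : Q ∣ A * B - 1 := by
      rw [← mk_eq_zero, map_sub, map_mul, hB, ← hu, Units.mul_inv, map_one, sub_self]
    exact ⟨B, -C, by linear_combination hC⟩
  · rintro ⟨u, v, h⟩
    refine .of_mul_eq_one (mk Q u) ?_
    simpa [mk_self, mul_comm] using congrArg (mk Q) h

theorem mk_injOn_natDegree_lt (hQ : Q.Monic) :
    Set.InjOn (mk Q) {p | p.natDegree < Q.natDegree} := by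
  intro A hA B hB hAB
  by_contra hne
  refine hQ.not_dvd_of_natDegree_lt (sub_ne_zero.mpr hne) ?_ (mk_eq_mk.mp hAB)
  exact (natDegree_sub_le A B).trans_lt (max_lt hA hB)

theorem _root_.Polynomial.Monic.natCard_adjoinRoot (hQ : Q.Monic) :
    Nat.card (AdjoinRoot Q) = Nat.card R ^ Q.natDegree := by
  rw [Nat.card_congr (powerBasis' hQ).basis.equivFun.toEquiv, Nat.card_fun, Nat.card_fin]
  rfl

theorem isUnit_mk_of_natDegree_lt {K : Type*} [Field K] {Q N : K[X]} (hQ : Q.Monic)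
    (hirr : Irreducible Q) (hN : N ≠ 0) (hdeg : N.natDegree < Q.natDegree) :
    IsUnit (mk Q N) := by
  have := Fact.mk hirr
  have hzero : (0 : K[X]) ∈ {p : K[X] | p.natDegree < Q.natDegree} := by
    simpa using hirr.natDegree_pos
  exact isUnit_iff_ne_zero.mpr fun h ↦
    hN (mk_injOn_natDegree_lt hQ hdeg hzero (h.trans (map_zero _).symm))

theorem isDirichletChar_comp_mk (ψ : MulChar (AdjoinRoot Q) ℂ) :
    IsDirichletChar Q (ψ ∘ mk Q) := by
  refine ⟨fun A B ↦ ?_, fun A B ↦ ?_, fun A ↦ ?_⟩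
  · simp [mk_self]
  · simp
  · rw [Function.comp_apply, ← isUnit_mk_iff_isCoprime, ψ.apply_ne_zero_iff]

theorem comp_mk_injective : Function.Injective fun ψ : MulChar (AdjoinRoot Q) ℂ ↦ ψ ∘ mk Q :=
  fun _ _ h ↦ MulChar.ext' fun a ↦ by
    obtain ⟨A, rfl⟩ := mk_surjective a
    exact congrFun h A

theorem one_comp_mk : (1 : MulChar (AdjoinRoot Q) ℂ) ∘ mk Q = trivialChar Q := by
  funext A
  by_cases hA : IsCoprime A Q
  · simp [trivialChar, hA, MulChar.one_apply (isUnit_mk_iff_isCoprime.mpr hA)]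
  · simp [trivialChar, hA, MulChar.map_nonunit _ (mt isUnit_mk_iff_isCoprime.mp hA)]

theorem _root_.IsDirichletChar.exists_eq_comp_mk {χ : R[X] → ℂ} (hχ : IsDirichletChar Q χ) :
    ∃ ψ : MulChar (AdjoinRoot Q) ℂ, ψ ∘ mk Q = χ := by
  obtain ⟨hperiodic, hmul, hne_zero⟩ := hχ
  let ψ : AdjoinRoot Q → ℂ := fun r ↦ χ (Function.surjInv mk_surjective r)
  have hψ (A : R[X]) : ψ (mk Q A) = χ A := by
    obtain ⟨C, hC⟩ := mk_eq_mk.mp (Function.surjInv_eq mk_surjective (mk Q A))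
    rw [← hperiodic A C]
    exact congrArg χ (by linear_combination hC)
  have hone : χ 1 = 1 := by
    have h : χ 1 * χ 1 = χ 1 * 1 := by rw [← hmul, mul_one, mul_one]
    exact mul_left_cancel₀ ((hne_zero 1).mpr isCoprime_one_left) h
  refine ⟨⟨⟨⟨ψ, ?_⟩, fun r s ↦ ?_⟩, fun r hr ↦ ?_⟩, funext hψ⟩
  · rw [← map_one (mk Q), hψ, hone]
  · induction r using induction_on
    induction s using induction_on
    simp only [← map_mul, hψ, hmul]
  · induction r using induction_on
    change ψ _ = 0
    rw [hψ]
    exact not_not.mp fun h ↦ hr (isUnit_mk_iff_isCoprime.mpr ((hne_zero _).mp h))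

theorem setOf_isDirichletChar_ne_trivialChar :
    {χ : R[X] → ℂ | IsDirichletChar Q χ ∧ χ ≠ trivialChar Q} =
      (fun ψ : MulChar (AdjoinRoot Q) ℂ ↦ ψ ∘ mk Q) '' {ψ | ψ ≠ 1} := by
  ext χ
  constructor
  · rintro ⟨hχ, hne⟩
    obtain ⟨ψ, rfl⟩ := hχ.exists_eq_comp_mk
    exact ⟨ψ, fun h ↦ hne (h ▸ one_comp_mk), rfl⟩
  · rintro ⟨ψ, hψ, rfl⟩
    exact ⟨isDirichletChar_comp_mk ψ, fun h ↦ hψ (comp_mk_injective (h.trans one_comp_mk.symm))⟩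

end AdjoinRoot

namespace Polynomial

open Finset

variable (R : Type*) [Semiring R] [Finite R]

theorem finite_setOf_monic_natDegree_le (D : ℕ) :
    {p : R[X] | p.Monic ∧ p.natDegree ≤ D}.Finite := by
  refine (Set.finite_coe_iff.mp (Finite.of_equiv _ (degreeLTEquiv R (D + 1)).toEquiv.symm)).subset
    fun p ⟨_, hD⟩ ↦ ?_
  rw [SetLike.mem_coe, mem_degreeLT]
  exact degree_le_natDegree.trans_lt (by exact_mod_cast Nat.lt_succ_of_le hD)

def monicsNatDegreeLE (D : ℕ) : Finset R[X] :=
  (finite_setOf_monic_natDegree_le R D).toFinset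

variable {R}

theorem mem_monicsNatDegreeLE {D : ℕ} {p : R[X]} :
    p ∈ monicsNatDegreeLE R D ↔ p.Monic ∧ p.natDegree ≤ D :=
  Set.Finite.mem_toFinset _

variable [Nontrivial R]

theorem card_filter_monicsNatDegreeLE_natDegree_eq {D n : ℕ} (hn : n ≤ D) :
    #{p ∈ monicsNatDegreeLE R D | p.natDegree = n} = Nat.card R ^ n := by
  rw [← Nat.card_eq_finsetCard,
    show Nat.card R ^ n = Nat.card (Fin n → R) by rw [Nat.card_fun, Nat.card_fin]]
  refine Nat.card_congr (.trans (.subtypeEquivRight fun p ↦ ?_)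
    ((monicEquivDegreeLT n).trans (degreeLTEquiv R n).toEquiv))
  simp only [mem_filter, mem_monicsNatDegreeLE]
  constructor
  · rintro ⟨⟨hp, -⟩, rfl⟩
    exact ⟨hp, rfl⟩
  · rintro ⟨hp, rfl⟩
    exact ⟨⟨hp, hn⟩, rfl⟩

theorem sum_monicsNatDegreeLE_comp_natDegree {M : Type*} [AddCommMonoid M] (D : ℕ)
    (f : ℕ → M) :
    ∑ p ∈ monicsNatDegreeLE R D, f p.natDegree = ∑ n ∈ range (D + 1), Nat.card R ^ n • f n := by
  rw [← sum_fiberwise_of_maps_to' (t := range (D + 1)) fun p hp ↦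
    mem_range_succ_iff.mpr (mem_monicsNatDegreeLE.mp hp).2]
  refine sum_congr rfl fun n hn ↦ ?_
  rw [sum_const, card_filter_monicsNatDegreeLE_natDegree_eq (mem_range_succ_iff.mp hn)]

end Polynomial

theorem polyPhi_eq [Field F] {Q : F[X]} (hQ : Q.Monic) (hirr : Irreducible Q) :
    polyPhi Q = Nat.card F ^ Q.natDegree - 1 := by
  have := Fact.mk hirr
  exact (Nat.card_units (AdjoinRoot Q)).trans (congrArg (· - 1) hQ.natCard_adjoinRoot)

section SecondMoment

open AdjoinRoot

variable [Field F] [Finite F] {Q : F[X]}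

theorem Lhalf_eq_sum (q D : ℕ) (χ : F[X] → ℂ) :
    Lhalf q D χ =
      ∑ N ∈ monicsNatDegreeLE F D, ((√((q : ℝ) ^ N.natDegree) : ℝ) : ℂ)⁻¹ * χ N := by
  rw [Lhalf, ← (finite_setOf_monic_natDegree_le F D).coe_toFinset, finsum_mem_coe_finset]
  exact Finset.sum_congr rfl fun N _ ↦ div_eq_inv_mul _ _

theorem sum_norm_Lhalf_comp_mk_sq [Finite (AdjoinRoot Q)] (hQ : Q.Monic) (hirr : Irreducible Q) :
    ∑ ψ : MulChar (AdjoinRoot Q) ℂ, ‖Lhalf (Nat.card F) (Q.natDegree - 1) (ψ ∘ mk Q)‖ ^ 2 =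
      polyPhi Q * Q.natDegree := by
  have hdeg : 0 < Q.natDegree := hirr.natDegree_pos
  have hmem {N : F[X]} (hN : N ∈ monicsNatDegreeLE F (Q.natDegree - 1)) :
      N.Monic ∧ N.natDegree < Q.natDegree := by
    rw [mem_monicsNatDegreeLE] at hN
    exact ⟨hN.1, by omega⟩
  have hweight (N : F[X]) : ‖((√((Nat.card F : ℝ) ^ N.natDegree) : ℝ) : ℂ)⁻¹‖ ^ 2 =
      ((Nat.card F : ℝ) ^ N.natDegree)⁻¹ := by
    rw [norm_inv, Complex.norm_real, Real.norm_of_nonneg (Real.sqrt_nonneg _), inv_pow,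
      Real.sq_sqrt (by positivity)]
  have hq : (Nat.card F : ℝ) ≠ 0 := by exact_mod_cast Nat.card_pos.ne'
  rw [show polyPhi Q = Nat.card (AdjoinRoot Q)ˣ from rfl]
  simp_rw [Lhalf_eq_sum, Function.comp_apply]
  rw [MulChar.sum_norm_sq_sum_mul_apply _ _
    (fun N hN ↦ isUnit_mk_of_natDegree_lt hQ hirr (hmem hN).1.ne_zero (hmem hN).2)
    (fun M hM N hN ↦ mk_injOn_natDegree_lt hQ (hmem hM).2 (hmem hN).2)]
  simp_rw [hweight]
  rw [sum_monicsNatDegreeLE_comp_natDegree (f := fun n ↦ ((Nat.card F : ℝ) ^ n)⁻¹)]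
  simp [nsmul_eq_mul, mul_inv_cancel₀ (pow_ne_zero _ hq), Nat.sub_add_cancel hdeg]

theorem finsum_norm_Lhalf_sq (hQ : Q.Monic) (hirr : Irreducible Q) :
    ∑ᶠ χ ∈ {χ : F[X] → ℂ | IsDirichletChar Q χ ∧ χ ≠ trivialChar Q},
        ‖Lhalf (Nat.card F) (Q.natDegree - 1) χ‖ ^ 2 =
      polyPhi Q * Q.natDegree - ‖Lhalf (Nat.card F) (Q.natDegree - 1) (trivialChar Q)‖ ^ 2 := by
  classical
  have := hQ.finite_adjoinRoot
  have : Finite (AdjoinRoot Q) := Module.finite_of_finite F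
  have hne_one : (Set.toFinite {ψ : MulChar (AdjoinRoot Q) ℂ | ψ ≠ 1}).toFinset =
      Finset.univ.erase 1 := by
    ext
    simp
  rw [setOf_isDirichletChar_ne_trivialChar, finsum_mem_image comp_mk_injective.injOn,
    finsum_mem_eq_finite_toFinset_sum _ (Set.toFinite _), hne_one,
    Finset.sum_erase_eq_sub (Finset.mem_univ 1), sum_norm_Lhalf_comp_mk_sq hQ hirr, one_comp_mk]

theorem norm_Lhalf_mul_sqrt_sub_one_le (D : ℕ) {χ : F[X] → ℂ} (hχ : ∀ N, ‖χ N‖ ≤ 1) :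
    ‖Lhalf (Nat.card F) D χ‖ * (√(Nat.card F) - 1) ≤ √(Nat.card F) ^ (D + 1) := by
  set s := √(Nat.card F : ℝ)
  have hs : 1 ≤ s := Real.one_le_sqrt.mpr (by exact_mod_cast Nat.card_pos)
  have hsq : s ^ 2 = Nat.card F := Real.sq_sqrt (Nat.cast_nonneg _)
  have hsqrt_pow (n : ℕ) : √((Nat.card F : ℝ) ^ n) = s ^ n := by
    rw [← hsq, ← pow_mul, mul_comm, pow_mul, Real.sqrt_sq (by positivity)]
  have hbound : ‖Lhalf (Nat.card F) D χ‖ ≤ ∑ n ∈ Finset.range (D + 1), s ^ n := calc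
    ‖Lhalf (Nat.card F) D χ‖
        ≤ ∑ N ∈ monicsNatDegreeLE F D, (s ^ N.natDegree)⁻¹ := by
          rw [Lhalf_eq_sum]
          refine (norm_sum_le _ _).trans (Finset.sum_le_sum fun N _ ↦ ?_)
          rw [norm_mul, norm_inv, Complex.norm_real, Real.norm_of_nonneg (Real.sqrt_nonneg _),
            hsqrt_pow]
          exact mul_le_of_le_one_right (by positivity) (hχ N)
    _ = ∑ n ∈ Finset.range (D + 1), s ^ n := by
          rw [sum_monicsNatDegreeLE_comp_natDegree (f := fun n ↦ (s ^ n)⁻¹)]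
          refine Finset.sum_congr rfl fun n _ ↦ ?_
          rw [nsmul_eq_mul, Nat.cast_pow, ← hsq, ← pow_mul, mul_comm, pow_mul, sq,
            mul_pow, inv_mul_cancel_left₀ (by positivity)]
  calc ‖Lhalf (Nat.card F) D χ‖ * (s - 1)
      ≤ (∑ n ∈ Finset.range (D + 1), s ^ n) * (s - 1) :=
        mul_le_mul_of_nonneg_right hbound (by linarith)
    _ = s ^ (D + 1) - 1 := geom_sum_mul s (D + 1)
    _ ≤ s ^ (D + 1) := by linarith

theorem two_le_card_pow_natDegree (hirr : Irreducible Q) : 2 ≤ Nat.card F ^ Q.natDegree :=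
  Finite.one_lt_card.trans_le (Nat.le_self_pow hirr.natDegree_pos.ne' _)

theorem norm_Lhalf_trivialChar_sq_div_polyPhi_le (hQ : Q.Monic) (hirr : Irreducible Q) :
    ‖Lhalf (Nat.card F) (Q.natDegree - 1) (trivialChar Q)‖ ^ 2 / polyPhi Q ≤
      2 / (√(Nat.card F) - 1) ^ 2 := by
  set s := √(Nat.card F : ℝ)
  set L := ‖Lhalf (Nat.card F) (Q.natDegree - 1) (trivialChar Q)‖
  have hs : 1 < s := (Real.lt_sqrt zero_le_one).mpr (by exact_mod_cast Finite.one_lt_card)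
  have htriv (N : F[X]) : ‖trivialChar Q N‖ ≤ 1 := by
    unfold trivialChar
    split_ifs <;> simp
  have hL := norm_Lhalf_mul_sqrt_sub_one_le (Q.natDegree - 1) htriv
  rw [Nat.sub_add_cancel hirr.natDegree_pos] at hL
  have hsd : (s ^ Q.natDegree) ^ 2 = (Nat.card F : ℝ) ^ Q.natDegree := by
    rw [← pow_mul, mul_comm, pow_mul, Real.sq_sqrt (Nat.cast_nonneg _)]
  have hq : (2 : ℝ) ≤ (Nat.card F : ℝ) ^ Q.natDegree := by
    exact_mod_cast two_le_card_pow_natDegree hirr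
  have hφ : (polyPhi Q : ℝ) = (Nat.card F : ℝ) ^ Q.natDegree - 1 := by
    rw [polyPhi_eq hQ hirr, Nat.cast_sub (by exact_mod_cast (one_le_two.trans hq)), Nat.cast_pow,
      Nat.cast_one]
  rw [div_le_div_iff₀ (by linarith) (by nlinarith), hφ]
  nlinarith [pow_le_pow_left₀ (by positivity) hL 2, mul_pow L (s - 1) 2]

end SecondMoment

/-- The second moment: for monic irreducible `Q` with `𝔇 = deg Q - 1`,
`(1/φ(Q)) Σ_{χ ≠ χ₀} |L(1/2,χ)|² = 𝔇 + O(1)`,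
the implied constant depending only on `q`. -/
theorem second_moment_of_Dirichlet_L_functions
    (F : Type*) [Field F] [Fintype F] (q : ℕ) (hq : Fintype.card F = q) :
    ∃ C : ℝ, ∀ Q : Polynomial F, Q.Monic → Irreducible Q →
      |(polyPhi Q : ℝ)⁻¹ *
          (∑ᶠ χ ∈ {χ : Polynomial F → ℂ | IsDirichletChar Q χ ∧ χ ≠ trivialChar Q},
            (‖Lhalf q (Q.natDegree - 1) χ‖) ^ 2) -
        ((Q.natDegree : ℝ) - 1)| ≤ C := by
  obtain rfl : q = Nat.card F := hq ▸ Nat.card_eq_fintype_card.symm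
  refine ⟨1 + 2 / (√(Nat.card F) - 1) ^ 2, fun Q hQ hirr ↦ ?_⟩
  have hφ : (0 : ℝ) < polyPhi Q := by
    have := two_le_card_pow_natDegree hirr
    exact_mod_cast (polyPhi_eq hQ hirr).symm ▸ (by omega : 0 < Nat.card F ^ Q.natDegree - 1)
  have hX := norm_Lhalf_trivialChar_sq_div_polyPhi_le hQ hirr
  have hX₀ : 0 ≤ ‖Lhalf (Nat.card F) (Q.natDegree - 1) (trivialChar Q)‖ ^ 2 / polyPhi Q := by
    positivity
  rw [finsum_norm_Lhalf_sq hQ hirr, mul_sub, inv_mul_cancel_left₀ hφ.ne', inv_mul_eq_div, abs_le]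
  constructor <;> linarith
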